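/- arXiv:2412.02050 — 3 statements merged into one kernel-verified Lean document; each statement's English description precedes it below -/
import Mathlib

section
/- On the set S = {(x,y,z) ∈ ℕ₊³ : x² + 4yz = p} for a prime p ≡ 1 (mod 4), the map sending (x,y,z) to (x+2z, z, y−x−z) if x < y−z, to (2y−x, y, x−y+z) if y−z < x < 2y, and to (x−2y, x−y+z, y) if x > 2y, is a well-defined involution of S. -/
/-- Zagier's map, written on integer triples. -/
def zagierMap (t : ℤ × ℤ × ℤ) : ℤ × ℤ × ℤ :=
  let x := t.1; let y := t.2.1; let z := t.2.2
  if x < y - z then (x + 2 * z, z, y - x - z)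
  else if x < 2 * y then (2 * y - x, y, x - y + z)
  else (x - 2 * y, x - y + z, y)

/-- Zagier's map is a well-defined involution on
`S = {(x,y,z) ∈ ℕ₊³ : x² + 4yz = p}` for a prime `p ≡ 1 (mod 4)`. -/
theorem zagierMap_involution_on_S
    (p : ℕ) (hp : p.Prime) (h1 : p % 4 = 1)
    (x y z : ℤ) (hx : 0 < x) (hy : 0 < y) (hz : 0 < z)
    (heq : x ^ 2 + 4 * y * z = (p : ℤ)) :
    (0 < (zagierMap (x, y, z)).1 ∧ 0 < (zagierMap (x, y, z)).2.1 ∧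
      0 < (zagierMap (x, y, z)).2.2 ∧
      (zagierMap (x, y, z)).1 ^ 2 +
        4 * (zagierMap (x, y, z)).2.1 * (zagierMap (x, y, z)).2.2 = (p : ℤ)) ∧
    zagierMap (zagierMap (x, y, z)) = (x, y, z) := by
  have hpZ : Prime (p : ℤ) := Nat.prime_iff_prime_int.mp hp
  have hne1 : x ≠ y - z := by
    intro h
    have hsq : (p : ℤ) = (y + z) ^ 2 := by rw [← heq, h]; ring
    have hd : (p : ℤ) ∣ (y + z) * (y + z) := by rw [hsq]; exact ⟨1, by ring⟩
    rcases hpZ.2.2 _ _ hd with h' | h' <;>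
    · have hle : (p : ℤ) ≤ y + z := Int.le_of_dvd (by omega) h'
      nlinarith
  have hne2 : x ≠ 2 * y := by
    intro h
    have : (4 : ℤ) ∣ (p : ℤ) := ⟨y ^ 2 + y * z, by rw [← heq, h]; ring⟩
    have : (4 : ℕ) ∣ p := by exact_mod_cast this
    omega
  simp only [zagierMap]
  by_cases hc1 : x < y - z
  · have h2 : ¬ (x + 2 * z < z - (y - x - z)) := by push_neg; nlinarith
    have h3 : ¬ (x + 2 * z < 2 * z) := by push_neg; nlinarith
    simp only [if_pos hc1, if_neg h2, if_neg h3]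
    refine ⟨⟨by nlinarith, hz, by nlinarith, by nlinarith⟩, ?_⟩
    simp only [Prod.mk.injEq]; constructor; ring; constructor; ring; trivial
  · by_cases hc2 : x < 2 * y
    · have hc1' : y - z < x := lt_of_le_of_ne (not_lt.mp hc1) (Ne.symm hne1)
      have h2 : ¬ (2 * y - x < y - (x - y + z)) := by push_neg; nlinarith
      have h3 : 2 * y - x < 2 * y := by nlinarith
      simp only [if_neg hc1, if_pos hc2, if_neg h2, if_pos h3]
      refine ⟨⟨by nlinarith, hy, by nlinarith, by nlinarith⟩, ?_⟩
      simp only [Prod.mk.injEq]; constructor; ring; constructor; trivial; ring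
    · have hc2' : 2 * y < x := lt_of_le_of_ne (not_lt.mp hc2) (Ne.symm hne2)
      have h2 : x - 2 * y < (x - y + z) - y := by nlinarith
      simp only [if_neg hc1, if_neg hc2, if_pos h2]
      refine ⟨⟨by nlinarith, by nlinarith, hy, by nlinarith⟩, ?_⟩
      simp only [Prod.mk.injEq]; constructor; ring; constructor; trivial; ring
end

section
/- The Zagier involution on S = {(x,y,z) ∈ ℕ₊³ : x² + 4yz = p}, for p ≡ 1 (mod 4) prime, has exactly one fixed point, namely (1, 1, (p−1)/4). -/
/-- The Zagier involution on `S = {(x,y,z) ∈ ℕ₊³ : x² + 4yz = p}`, for `p ≡ 1 (mod 4)`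
prime, has exactly one fixed point, namely `(1, 1, (p-1)/4)`. -/
theorem zagierMap_unique_fixed_point
    (p : ℕ) (hp : p.Prime) (h1 : p % 4 = 1)
    (x y z : ℤ) (hx : 0 < x) (hy : 0 < y) (hz : 0 < z)
    (heq : x ^ 2 + 4 * y * z = (p : ℤ)) :
    zagierMap (x, y, z) = (x, y, z) ↔ (x, y, z) = (1, 1, ((p : ℤ) - 1) / 4) := by
  have hp2 : 2 ≤ p := hp.two_le
  have hpprime : Prime ((p : ℤ)) := Nat.prime_iff_prime_int.mp hp
  constructor
  · intro h
    simp only [zagierMap] at h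
    split_ifs at h with hc1 hc2 <;> simp only [Prod.mk.injEq] at h
    · exfalso; omega
    · -- middle branch: x = y
      have hxy : x = y := by omega
      subst hxy
      have hdvd : x ∣ (p : ℤ) := ⟨x + 4 * z, by linarith [heq, sq x]⟩
      have hnat : x.natAbs ∣ p := by
        rw [← Int.natAbs_natCast p]; exact Int.natAbs_dvd_natAbs.mpr hdvd
      have habs : (x.natAbs : ℤ) = x := Int.natAbs_of_nonneg hx.le
      have hx1 : x = 1 ∨ x = (p : ℤ) := by
        rcases hp.eq_one_or_self_of_dvd _ hnat with h' | h' <;> omega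
      rcases hx1 with rfl | hxp
      · have : z = ((p : ℤ) - 1) / 4 := by
          have : 1 + 4 * z = (p : ℤ) := by linarith [heq]
          omega
        simp [Prod.ext_iff, this]
      · exfalso
        have hple : (p : ℤ) ^ 2 < (p : ℤ) ^ 2 + 4 * (p : ℤ) * z := by
          have : (0 : ℤ) < (p : ℤ) := by positivity
          nlinarith
        have : (p : ℤ) ^ 2 < (p : ℤ) := by rw [hxp] at heq; linarith
        nlinarith [hp2]
    · exfalso; omega
  · rintro h
    obtain ⟨hx1, hy1, hz1⟩ : x = 1 ∧ y = 1 ∧ z = ((p : ℤ) - 1) / 4 := by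
      simpa [Prod.ext_iff] using h
    subst hx1; subst hy1
    unfold zagierMap
    simp only
    rw [if_neg (by omega), if_pos (by omega)]
    norm_num
end

section
/- The homogeneous equation y² + z² = (3t² − x²)(x² − 2t²) has no nontrivial integer solutions: if x,y,z,t ∈ ℤ satisfy the equation then x = y = z = t = 0. -/
private lemma isk_sq_add_sq_mod_four (u v : ℕ) : (u ^ 2 + v ^ 2) % 4 ≠ 3 := by
  have h1 : u ^ 2 % 4 = u % 4 * (u % 4) % 4 := by rw [sq, Nat.mul_mod]
  have h2 : v ^ 2 % 4 = v % 4 * (v % 4) % 4 := by rw [sq, Nat.mul_mod]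
  have hu : u % 4 < 4 := Nat.mod_lt _ (by norm_num)
  have hv : v % 4 < 4 := Nat.mod_lt _ (by norm_num)
  interval_cases h : u % 4 <;> interval_cases h' : v % 4 <;> omega

/-- Key arithmetic lemma: if `y² + z² = d⁴·(a·b)` with `a, b, d > 0`,
`a, b` sharing no prime factor, then `a % 4 ≠ 3`. -/
private lemma isk_key (a b d y z : ℕ) (ha : 0 < a) (hb : 0 < b) (hd : 0 < d)
    (hcop : ∀ q : ℕ, q.Prime → q ∣ a → q ∣ b → False)
    (heq : y ^ 2 + z ^ 2 = d ^ 4 * (a * b)) : a % 4 ≠ 3 := by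
  intro ha3
  have H : ∀ q : ℕ, q.Prime → q % 4 = 3 → Even (padicValNat q (y ^ 2 + z ^ 2)) :=
    fun q hq h3 => by
      by_cases hdv : q ∣ y ^ 2 + z ^ 2
      · exact Nat.eq_sq_add_sq_iff.mp ⟨y, z, rfl⟩ q
          (Nat.mem_primeFactors.mpr ⟨hq, hdv, by rw [heq]; positivity⟩) h3
      · rw [padicValNat.eq_zero_of_not_dvd hdv]; exact Even.zero
  have hEva : ∀ q : ℕ, q.Prime → q % 4 = 3 → Even (padicValNat q a) := by
    intro q hq hq3
    by_cases hqa : q ∣ a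
    · haveI : Fact q.Prime := ⟨hq⟩
      have hqb : ¬ q ∣ b := fun hdvd => hcop q hq hqa hdvd
      have hvb : padicValNat q b = 0 := padicValNat.eq_zero_of_not_dvd hqb
      have hEv := H q hq hq3
      rw [heq, padicValNat.mul (by positivity) (by positivity),
        padicValNat.mul ha.ne' hb.ne', padicValNat.pow d 4, hvb] at hEv
      rw [Nat.even_iff] at hEv ⊢
      omega
    · rw [padicValNat.eq_zero_of_not_dvd hqa]; exact Even.zero
  obtain ⟨u, v, huv⟩ := Nat.eq_sq_add_sq_iff.mpr (fun q hq hq3 => hEva q (Nat.prime_of_mem_primeFactors hq) hq3)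
  exact isk_sq_add_sq_mod_four u v (huv ▸ ha3)

/-- Iskovskikh's example: y² + z² = (3t² − x²)(x² − 2t²) has no nontrivial
integer solutions. -/
theorem iskovskikh_no_nontrivial_integer_solutions
    (x y z t : ℤ)
    (h : y ^ 2 + z ^ 2 = (3 * t ^ 2 - x ^ 2) * (x ^ 2 - 2 * t ^ 2)) :
    x = 0 ∧ y = 0 ∧ z = 0 ∧ t = 0 := by
  suffices hxt : x = 0 ∧ t = 0 by
    obtain ⟨hx0, ht0⟩ := hxt
    subst hx0; subst ht0
    have h0 : y ^ 2 + z ^ 2 = 0 := by linear_combination h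
    have hy : y ^ 2 = 0 := by linarith [sq_nonneg y, sq_nonneg z]
    have hz : z ^ 2 = 0 := by linarith [sq_nonneg y, sq_nonneg z]
    exact ⟨rfl, pow_eq_zero_iff two_ne_zero |>.mp hy,
      pow_eq_zero_iff two_ne_zero |>.mp hz, rfl⟩
  by_contra hc
  -- set up gcd
  have hg : 0 < Int.gcd x t := by
    rw [Int.gcd_pos_iff]
    by_contra hh; push_neg at hh; exact hc ⟨hh.1, hh.2⟩
  set g : ℕ := Int.gcd x t with hgdef
  set x₁ : ℤ := x / g with hx1def
  set t₁ : ℤ := t / g with ht1def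
  have hx : x = g * x₁ := (Int.mul_ediv_cancel' (Int.gcd_dvd_left x t)).symm
  have ht : t = g * t₁ := (Int.mul_ediv_cancel' (Int.gcd_dvd_right x t)).symm
  have hcop : IsCoprime x₁ t₁ :=
    Int.isCoprime_iff_gcd_eq_one.mpr (Int.gcd_div_gcd_div_gcd hg)
  set A : ℤ := 3 * t₁ ^ 2 - x₁ ^ 2 with hAdef
  set B : ℤ := x₁ ^ 2 - 2 * t₁ ^ 2 with hBdef
  have heq : y ^ 2 + z ^ 2 = (g : ℤ) ^ 4 * (A * B) := by
    rw [hx, ht] at h; rw [hAdef, hBdef]; linear_combination h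
  have hgZ : (0:ℤ) < (g:ℤ) := by exact_mod_cast hg
  have hABnn : 0 ≤ A * B := by
    by_contra hneg
    push_neg at hneg
    have hlt := mul_neg_of_pos_of_neg (pow_pos hgZ 4) hneg
    nlinarith [sq_nonneg y, sq_nonneg z]
  rcases hABnn.lt_or_eq with hABpos | hAB0
  · -- A*B > 0, so A > 0 and B > 0
    have hApos : 0 < A ∧ 0 < B := by
      rcases mul_pos_iff.mp hABpos with ⟨h1, h2⟩ | ⟨h1, h2⟩
      · exact ⟨h1, h2⟩
      · exfalso; nlinarith [sq_nonneg t₁]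
    obtain ⟨hA, hB⟩ := hApos
    -- parity analysis: A % 4 = 3 or B % 4 = 3
    have hmod : A % 4 = 3 ∨ B % 4 = 3 := by
      rcases Int.even_or_odd x₁ with ⟨m, hm⟩ | ⟨m, hm⟩ <;>
        rcases Int.even_or_odd t₁ with ⟨n, hn⟩ | ⟨n, hn⟩
      · exfalso
        have h2 : IsUnit (2:ℤ) := hcop.isUnit_of_dvd' ⟨m, by omega⟩ ⟨n, by omega⟩
        rw [Int.isUnit_iff] at h2; omega
      · left
        have : A = 4 * (3*n^2 + 3*n - m^2) + 3 := by rw [hAdef, hm, hn]; ring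
        omega
      · left
        have : A = 4 * (3*n^2 - m^2 - m - 1) + 3 := by rw [hAdef, hm, hn]; ring
        omega
      · right
        have : B = 4 * (m^2 + m - 2*n^2 - 2*n - 1) + 3 := by rw [hBdef, hm, hn]; ring
        omega
    -- coprimality of A and B at primes
    have hnocommon : ∀ q : ℕ, q.Prime → (q:ℤ) ∣ A → (q:ℤ) ∣ B → False := by
      intro q hq hqA hqB
      have hqZ : Prime (q:ℤ) := Nat.prime_iff_prime_int.mp hq
      have hqt : (q:ℤ) ∣ t₁ := by
        have : (q:ℤ) ∣ t₁ ^ 2 := by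
          have : (q:ℤ) ∣ A + B := dvd_add hqA hqB
          have hAB : A + B = t₁ ^ 2 := by rw [hAdef, hBdef]; ring
          rwa [hAB] at this
        exact hqZ.dvd_of_dvd_pow this
      have hqx : (q:ℤ) ∣ x₁ := by
        have : (q:ℤ) ∣ x₁ ^ 2 := by
          have : (q:ℤ) ∣ 2 * A + 3 * B := dvd_add (Dvd.dvd.mul_left hqA 2) (Dvd.dvd.mul_left hqB 3)
          have hAB : 2 * A + 3 * B = x₁ ^ 2 := by rw [hAdef, hBdef]; ring
          rwa [hAB] at this
        exact hqZ.dvd_of_dvd_pow this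
      have := hcop.isUnit_of_dvd' hqx hqt
      rw [Int.isUnit_iff] at this
      have := hq.two_le
      omega
    -- move to ℕ
    set a : ℕ := A.toNat with hadef
    set b : ℕ := B.toNat with hbdef
    have haA : (a : ℤ) = A := Int.toNat_of_nonneg hA.le
    have hbB : (b : ℤ) = B := Int.toNat_of_nonneg hB.le
    have hha : 0 < a := by omega
    have hhb : 0 < b := by omega
    have hnat : y.natAbs ^ 2 + z.natAbs ^ 2 = g ^ 4 * (a * b) := by
      have : ((y.natAbs ^ 2 + z.natAbs ^ 2 : ℕ) : ℤ) = ((g ^ 4 * (a * b) : ℕ) : ℤ) := by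
        push_cast [haA, hbB]
        rw [sq_abs, sq_abs]
        exact heq
      exact_mod_cast this
    have hcopN : ∀ q : ℕ, q.Prime → q ∣ a → q ∣ b → False := by
      intro q hq hqa hqb
      refine hnocommon q hq ?_ ?_
      · rw [← haA]; exact_mod_cast Int.natCast_dvd_natCast.mpr hqa
      · rw [← hbB]; exact_mod_cast Int.natCast_dvd_natCast.mpr hqb
    rcases hmod with h3 | h3
    · exact isk_key a b g y.natAbs z.natAbs hha hhb hg hcopN hnat (by omega)
    · exact isk_key b a g y.natAbs z.natAbs hhb hha hg
        (fun q hq h1 h2 => hcopN q hq h2 h1)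
        (by rw [hnat]; ring) (by omega)
  · -- A*B = 0
    rcases mul_eq_zero.mp hAB0.symm with hA0 | hB0
    · -- 3 t₁² = x₁²
      have h3 : Prime (3:ℤ) := Int.prime_three
      have hx2 : x₁ ^ 2 = 3 * t₁ ^ 2 := by rw [hAdef] at hA0; linarith
      have h3x : (3:ℤ) ∣ x₁ := h3.dvd_of_dvd_pow ⟨t₁ ^ 2, hx2⟩
      obtain ⟨k, hk⟩ := h3x
      have h3t : (3:ℤ) ∣ t₁ := by
        refine h3.dvd_of_dvd_pow (n := 2) ⟨k ^ 2, ?_⟩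
        have hx9 : x₁ ^ 2 = 9 * k ^ 2 := by rw [hk]; ring
        linarith [hx2, hx9]
      have := hcop.isUnit_of_dvd' ⟨k, hk⟩ h3t
      rw [Int.isUnit_iff] at this; omega
    · -- x₁² = 2 t₁²
      have h2 : Prime (2:ℤ) := Int.prime_two
      have hx2 : x₁ ^ 2 = 2 * t₁ ^ 2 := by rw [hBdef] at hB0; linarith
      have h2x : (2:ℤ) ∣ x₁ := h2.dvd_of_dvd_pow ⟨t₁ ^ 2, hx2⟩
      obtain ⟨k, hk⟩ := h2x
      have h2t : (2:ℤ) ∣ t₁ := by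
        refine h2.dvd_of_dvd_pow (n := 2) ⟨k ^ 2, ?_⟩
        have hx4 : x₁ ^ 2 = 4 * k ^ 2 := by rw [hk]; ring
        linarith [hx2, hx4]
      have := hcop.isUnit_of_dvd' ⟨k, hk⟩ h2t
      rw [Int.isUnit_iff] at this; omega
end
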